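/- For every positive integer n, the generating polynomial of staircase tableaux of size n containing only the symbols α and β, at q = 1, factors as Z_n(1; α, β, 0, 0; 1) = ∏_{j=0}^{n−1} (α + β + j·αβ), as an identity in the polynomial ring ℤ[α, β]. -/

import Mathlib

inductive SLetter : Type
  | A | B | G | D
deriving DecidableEq, Repr

instance instFintypeSLetter : Fintype SLetter :=
  ⟨{SLetter.A, SLetter.B, SLetter.G, SLetter.D}, fun x => by cases x <;> simp⟩

/-- A filling `T` of the staircase Young diagram of shape `(n, n-1, …, 1)`
(boxes `(i,j)` with `i + j < n`, row `i` from the top, column `j` from the left,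
diagonal boxes those with `i + j + 1 = n`) is a staircase tableau if:
boxes outside the shape are unused (empty); no diagonal box is empty;
all boxes to the left of a `β` or `δ` in its row are empty;
all boxes above an `α` or `γ` in its column are empty. -/
def IsStaircase (n : ℕ) (T : Fin n → Fin n → Option SLetter) : Prop :=
  (∀ i j : Fin n, n ≤ (i : ℕ) + (j : ℕ) → T i j = none) ∧
  (∀ i j : Fin n, (i : ℕ) + (j : ℕ) + 1 = n → T i j ≠ none) ∧
  (∀ i j j' : Fin n, j' < j → (T i j = some SLetter.B ∨ T i j = some SLetter.D) →
      T i j' = none) ∧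
  (∀ i i' j : Fin n, i' < i → (T i j = some SLetter.A ∨ T i j = some SLetter.G) →
      T i' j = none)

instance (n : ℕ) : DecidablePred (IsStaircase n) := fun T => by
  unfold IsStaircase; infer_instance

/-- The staircase tableaux of size `n`. -/
def StaircaseTableau (n : ℕ) : Type :=
  {T : Fin n → Fin n → Option SLetter // IsStaircase n T}

instance (n : ℕ) : Fintype (StaircaseTableau n) := Subtype.fintype _

instance (n : ℕ) : DecidableEq (StaircaseTableau n) := Subtype.instDecidableEq

/-- The number of boxes of `T` filled with the symbol `x`. -/
def countLetter (n : ℕ) (T : Fin n → Fin n → Option SLetter) (x : SLetter) : ℕ :=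
  (Finset.univ.filter (fun p : Fin n × Fin n => T p.1 p.2 = some x)).card

/-- The label of the nearest labeled box strictly to the right of `(i,j)` in row `i`. -/
def rightLabel (n : ℕ) (T : Fin n → Fin n → Option SLetter) (i j : Fin n) : Option SLetter :=
  List.findSome? (fun j' => T i j') ((List.finRange n).drop ((j : ℕ) + 1))

/-- The label of the nearest labeled box strictly below `(i,j)` in column `j`. -/
def belowLabel (n : ℕ) (T : Fin n → Fin n → Option SLetter) (i j : Fin n) : Option SLetter :=
  List.findSome? (fun i' => T i' j) ((List.finRange n).drop ((i : ℕ) + 1))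

/-- Whether the (empty) box `(i,j)` receives a `q` in the weight of `T`:
an empty box seeing a `δ` to its right gets `q`; an empty box seeing an `α` or `γ` to
its right and a `β` or `γ` below it gets `q`; all other (empty) boxes get `1`. -/
def boxQ (n : ℕ) (T : Fin n → Fin n → Option SLetter) (i j : Fin n) : Bool :=
  match T i j with
  | some _ => false
  | none =>
    match rightLabel n T i j, belowLabel n T i j with
    | some SLetter.D, _ => true
    | some SLetter.A, some SLetter.B => true
    | some SLetter.A, some SLetter.G => true
    | some SLetter.G, some SLetter.B => true
    | some SLetter.G, some SLetter.G => true
    | _, _ => false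

/-- The exponent of `q` in the weight of `T`. -/
def qCount (n : ℕ) (T : Fin n → Fin n → Option SLetter) : ℕ :=
  (Finset.univ.filter (fun p : Fin n × Fin n => boxQ n T p.1 p.2 = true)).card

/-- The type of `T`, as a word in `Fin n → Bool`, read off the diagonal boxes from
northeast (index `0`) to southwest (index `n-1`): `true` (a `•`) for each `α` or `δ`,
`false` (a `∘`) for each `β` or `γ`. -/
def typeWord (n : ℕ) (T : Fin n → Fin n → Option SLetter) : Fin n → Bool := fun i =>
  match T i ⟨n - 1 - (i : ℕ), by have := i.isLt; omega⟩ with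
  | some SLetter.A => true
  | some SLetter.D => true
  | _ => false

/-- `t(T)`, the number of `•`'s in the type of `T`. -/
def bulletCount (n : ℕ) (T : Fin n → Fin n → Option SLetter) : ℕ :=
  (Finset.univ.filter (fun i : Fin n => typeWord n T i = true)).card

/-- The weight of a staircase tableau: the product of all its labels, with each empty
box contributing `q` or `1` according to the rules (`u` is set to `1`). -/
def stWt {R : Type*} [CommSemiring R] (n : ℕ) (a b g d q : R)
    (T : Fin n → Fin n → Option SLetter) : R :=
  a ^ countLetter n T SLetter.A * b ^ countLetter n T SLetter.B *
    g ^ countLetter n T SLetter.G * d ^ countLetter n T SLetter.D * q ^ qCount n T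

/-- The fugacity partition function `Z_n(y; α, β, γ, δ; q) = Σ_T wt(T) y^{t(T)}`,
summed over all staircase tableaux of size `n`. -/
def stZ (R : Type*) [CommSemiring R] (n : ℕ) (y a b g d q : R) : R :=
  ∑ T : StaircaseTableau n, stWt n a b g d q T.val * y ^ bulletCount n T.val

/-- The generating polynomial `Z_σ(α, β, γ, δ; q)` of staircase tableaux of a given
type `σ` (encoded as a list of booleans, `true` = `•`, `false` = `∘`). -/
def stZw (R : Type*) [CommSemiring R] (w : List Bool) (a b g d q : R) : R :=
  ∑ T ∈ Finset.univ.filter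
      (fun T : StaircaseTableau w.length => List.ofFn (typeWord w.length T.val) = w),
    stWt w.length a b g d q T.val

/-!
Besides `α` and `β`, also record `x ^ f(T)`, where `f(T)` is the number of columns of `T`
without an `α`. Deleting the top row of an α/β staircase tableau of size `n + 1` leaves one of
size `n`, and the possible top rows over `T` are those with a letter on the diagonal, further
letters only in columns without `α`, and at most one `β`, which must be the leftmost letter.
Summing over them multiplies the weight of `T` by `(α + β x)(α + x) ^ f(T)`, so
`Z_{n+1}(x) = (α + β x) Z_n(α + x)` and `Z_n(x) = ∏_{j<n} (α + β (x + j α))`; take `x = 1`.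
At `γ = δ = 0` only α/β tableaux contribute, and `q = y = 1` forgets the other statistics.
-/

namespace Staircase

open Finset SLetter

abbrev Filling (m : ℕ) := Fin m → Fin m → Option SLetter

abbrev TopRow (m : ℕ) := Fin (m + 1) → Option SLetter

variable {m : ℕ}

/-- Below the top row, the new last column lies outside the shape. -/
def consRow (r : TopRow m) (T : Filling m) : Filling (m + 1) :=
  fun i j => Fin.cases (r j) (fun i' => Fin.lastCases none (T i') j) i

def dropRow (T : Filling (m + 1)) : Filling m := fun i j => T i.succ j.castSucc

@[simp] lemma consRow_zero (r : TopRow m) (T : Filling m) :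
    consRow r T 0 = r := rfl

@[simp] lemma consRow_succ_castSucc (r : TopRow m) (T : Filling m)
    (i j : Fin m) : consRow r T i.succ j.castSucc = T i j := by
  simp [consRow]

@[simp] lemma consRow_succ_last (r : TopRow m) (T : Filling m) (i : Fin m) :
    consRow r T i.succ (Fin.last m) = none := by
  simp [consRow]

@[simp] lemma dropRow_consRow (r : TopRow m) (T : Filling m) :
    dropRow (consRow r T) = T := by
  funext i j; simp [dropRow]

lemma consRow_dropRow {T : Filling (m + 1)} (hT : ∀ i : Fin m, T i.succ (Fin.last m) = none) :
    consRow (T 0) (dropRow T) = T := by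
  funext i j
  rcases Fin.eq_zero_or_eq_succ i with rfl | ⟨i, rfl⟩
  · rfl
  rcases Fin.eq_castSucc_or_eq_last j with ⟨j, rfl⟩ | rfl
  · simp [dropRow]
  · simp [hT]

def IsCompatibleRow (T : Filling m) (r : TopRow m) : Prop :=
  r (Fin.last m) ≠ none ∧
  (∀ j j' : Fin (m + 1), j' < j → (r j = some B ∨ r j = some D) → r j' = none) ∧
  ∀ i j : Fin m, (T i j = some A ∨ T i j = some G) → r j.castSucc = none

lemma IsStaircase.of_consRow {r : TopRow m} {T : Filling m}
    (h : IsStaircase (m + 1) (consRow r T)) : IsStaircase m T ∧ IsCompatibleRow T r := by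
  obtain ⟨hshape, hdiag, hrow, hcol⟩ := h
  refine ⟨⟨fun i j hij => ?_, fun i j hij => ?_, fun i j j' hj hBD => ?_,
    fun i i' j hi hAG => ?_⟩, hdiag 0 (Fin.last m) (by simp), hrow 0, fun i j hAG => ?_⟩
  · simpa using hshape i.succ j.castSucc (by simp; omega)
  · simpa using hdiag i.succ j.castSucc (by simp; omega)
  · simpa using hrow i.succ j.castSucc j'.castSucc (by simpa using hj) (by simpa using hBD)
  · simpa using hcol i.succ i'.succ j.castSucc (by simpa using hi) (by simpa using hAG)
  · simpa using hcol i.succ 0 j.castSucc (Fin.succ_pos i) (by simpa using hAG)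

lemma IsStaircase.consRow {r : TopRow m} {T : Filling m}
    (hT : IsStaircase m T) (hr : IsCompatibleRow T r) : IsStaircase (m + 1) (consRow r T) := by
  obtain ⟨hshape, hdiag, hrow, hcol⟩ := hT
  obtain ⟨hlast, hrow₀, hcol₀⟩ := hr
  refine ⟨fun i j hij => ?_, fun i j hij => ?_, fun i j j' hj hBD => ?_,
    fun i i' j hi hAG => ?_⟩
  all_goals rcases Fin.eq_zero_or_eq_succ i with rfl | ⟨i, rfl⟩
  · simp at hij; omega
  · rcases Fin.eq_castSucc_or_eq_last j with ⟨j, rfl⟩ | rfl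
    · simpa using hshape i j (by simp at hij; omega)
    · simp
  · obtain rfl : j = Fin.last m := Fin.ext (by simp at hij ⊢; omega)
    simpa using hlast
  · rcases Fin.eq_castSucc_or_eq_last j with ⟨j, rfl⟩ | rfl
    · simpa using hdiag i j (by simp at hij; omega)
    · simp at hij
  · exact hrow₀ j j' hj hBD
  · rcases Fin.eq_castSucc_or_eq_last j with ⟨j, rfl⟩ | rfl
    · obtain ⟨j', rfl⟩ :=
        Fin.exists_castSucc_eq.mpr (lt_trans hj (Fin.castSucc_lt_last j)).ne
      simpa using hrow i j j' (by simpa using hj) (by simpa using hBD)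
    · simp at hBD
  · simp at hi
  · rcases Fin.eq_castSucc_or_eq_last j with ⟨j, rfl⟩ | rfl
    · rcases Fin.eq_zero_or_eq_succ i' with rfl | ⟨i', rfl⟩
      · simpa using hcol₀ i j (by simpa using hAG)
      · simpa using hcol i i' j (by simpa using hi) (by simpa using hAG)
    · simp at hAG

def IsAB (x : Option SLetter) : Prop := x ≠ some G ∧ x ≠ some D

instance : DecidablePred IsAB := fun _ => inferInstanceAs (Decidable (_ ∧ _))

def abTableaux (m : ℕ) : Finset (Filling m) :=
  {T | IsStaircase m T ∧ ∀ i j, IsAB (T i j)}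

def freeCols (T : Filling m) : Finset (Fin m) := {j | ∀ i, T i j ≠ some A}

def rowSupport (S : Finset (Fin m)) : Finset (Fin (m + 1)) :=
  insert (Fin.last m) (S.map Fin.castSuccEmb)

lemma last_mem_rowSupport (S : Finset (Fin m)) : Fin.last m ∈ rowSupport S :=
  mem_insert_self _ _

lemma rowSupport_nonempty (S : Finset (Fin m)) : (rowSupport S).Nonempty :=
  ⟨_, last_mem_rowSupport S⟩

lemma rowSupport_mono {S E : Finset (Fin m)} (h : S ⊆ E) : rowSupport S ⊆ rowSupport E :=
  insert_subset_insert _ (map_subset_map.mpr h)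

lemma card_rowSupport (S : Finset (Fin m)) : #(rowSupport S) = #S + 1 := by
  rw [rowSupport, card_insert_of_notMem, card_map]
  simp [(Fin.castSucc_lt_last _).ne]

lemma castSucc_mem_rowSupport {S : Finset (Fin m)} {j : Fin m} :
    j.castSucc ∈ rowSupport S ↔ j ∈ S := by
  simp [rowSupport, (Fin.castSucc_lt_last j).ne]

/-- The admissible top rows over an α/β staircase tableau whose columns without `α` are `E`. -/
def rowsOver (E : Finset (Fin m)) : Finset (TopRow m) :=
  {r | (∀ j, IsAB (r j)) ∧ r (Fin.last m) ≠ none ∧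
    (∀ j j', j' < j → r j = some B → r j' = none) ∧
    ∀ j, r j ≠ none → j ∈ rowSupport E}

lemma isAB_consRow_iff {r : TopRow m} {T : Filling m} :
    (∀ i j, IsAB (consRow r T i j)) ↔ (∀ j, IsAB (r j)) ∧ ∀ i j, IsAB (T i j) := by
  constructor
  · intro h
    exact ⟨h 0, fun i j => by simpa using h i.succ j.castSucc⟩
  · rintro ⟨hr, hT⟩ i j
    rcases Fin.eq_zero_or_eq_succ i with rfl | ⟨i, rfl⟩
    · exact hr j
    rcases Fin.eq_castSucc_or_eq_last j with ⟨j, rfl⟩ | rfl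
    · simpa using hT i j
    · simp [IsAB]

lemma forall_mem_rowSupport_iff {r : TopRow m} {E : Finset (Fin m)} :
    (∀ c, r c ≠ none → c ∈ rowSupport E) ↔ ∀ j ∉ E, r j.castSucc = none := by
  simp only [Fin.forall_fin_succ', castSucc_mem_rowSupport, last_mem_rowSupport, implies_true,
    and_true]
  exact forall_congr' fun j => not_imp_comm

lemma isCompatibleRow_iff {r : TopRow m} {T : Filling m}
    (hr : ∀ j, IsAB (r j)) (hT : ∀ i j, IsAB (T i j)) :
    IsCompatibleRow T r ↔ r (Fin.last m) ≠ none ∧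
      (∀ j j', j' < j → r j = some B → r j' = none) ∧
      ∀ j, r j ≠ none → j ∈ rowSupport (freeCols T) := by
  have hBD : ∀ j, (r j = some B ∨ r j = some D) ↔ r j = some B := fun j => by
    simp [(hr j).2]
  have hAG : ∀ i j, (T i j = some A ∨ T i j = some G) ↔ T i j = some A := fun i j => by
    simp [(hT i j).1]
  simp only [IsCompatibleRow, hBD, hAG, forall_mem_rowSupport_iff, freeCols, mem_filter,
    mem_univ, true_and, not_forall, not_not, forall_exists_index]
  exact and_congr_right fun _ => and_congr_right fun _ => forall_comm

lemma consRow_mem_abTableaux {r : TopRow m} {T : Filling m} :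
    consRow r T ∈ abTableaux (m + 1) ↔ T ∈ abTableaux m ∧ r ∈ rowsOver (freeCols T) := by
  simp only [abTableaux, rowsOver, mem_filter, mem_univ, true_and]
  constructor
  · rintro ⟨hC, hAB⟩
    obtain ⟨hT, hr⟩ := IsStaircase.of_consRow hC
    obtain ⟨hrAB, hTAB⟩ := isAB_consRow_iff.mp hAB
    exact ⟨⟨hT, hTAB⟩, hrAB, (isCompatibleRow_iff hrAB hTAB).mp hr⟩
  · rintro ⟨⟨hT, hTAB⟩, hrAB, hr⟩
    exact ⟨IsStaircase.consRow hT ((isCompatibleRow_iff hrAB hTAB).mpr hr),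
      isAB_consRow_iff.mpr ⟨hrAB, hTAB⟩⟩

lemma consRow_dropRow_of_mem {T : Filling (m + 1)} (hT : T ∈ abTableaux (m + 1)) :
    consRow (T 0) (dropRow T) = T := by
  simp only [abTableaux, mem_filter] at hT
  exact consRow_dropRow fun i => hT.2.1.1 i.succ (Fin.last m) (by simp)

lemma sum_abTableaux_succ {M : Type*} [AddCommMonoid M] (f : Filling (m + 1) → M) :
    ∑ T ∈ abTableaux (m + 1), f T =
      ∑ T ∈ abTableaux m, ∑ r ∈ rowsOver (freeCols T), f (consRow r T) := by
  rw [← sum_sigma (abTableaux m) (fun T => rowsOver (freeCols T)) fun p => f (consRow p.2 p.1)]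
  refine sum_nbij' (fun T => ⟨dropRow T, T 0⟩) (fun p => consRow p.2 p.1) (fun T hT => ?_)
    (fun p hp => ?_) (fun T hT => consRow_dropRow_of_mem hT) (fun p _ => by simp) (fun T hT => ?_)
  · rw [← consRow_dropRow_of_mem hT, consRow_mem_abTableaux] at hT
    simpa using hT
  · exact consRow_mem_abTableaux.mpr (mem_sigma.mp hp)
  · simp only [consRow_dropRow_of_mem hT]

lemma countLetter_consRow (r : TopRow m) (T : Filling m) (x : SLetter) :
    countLetter (m + 1) (consRow r T) x = #{j | r j = some x} + countLetter m T x := by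
  simp only [countLetter, card_filter, Fintype.sum_prod_type]
  rw [Fin.sum_univ_succ]
  refine congrArg _ (sum_congr rfl fun i _ => ?_)
  rw [Fin.sum_univ_castSucc]
  simp

lemma freeCols_consRow (r : TopRow m) (T : Filling m) :
    freeCols (consRow r T) = {c ∈ rowSupport (freeCols T) | r c ≠ some A} := by
  ext c
  rcases Fin.eq_castSucc_or_eq_last c with ⟨j, rfl⟩ | rfl
  · simp [freeCols, Fin.forall_fin_succ, castSucc_mem_rowSupport, and_comm]
  · simp [freeCols, Fin.forall_fin_succ, last_mem_rowSupport]

def rowStart (S : Finset (Fin m)) : Fin (m + 1) := (rowSupport S).min' (rowSupport_nonempty S)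

lemma rowStart_mem (S : Finset (Fin m)) : rowStart S ∈ rowSupport S := min'_mem _ _

lemma rowStart_le {S : Finset (Fin m)} {c : Fin (m + 1)} (h : c ∈ rowSupport S) :
    rowStart S ≤ c :=
  min'_le _ _ h

def encodeRow (hasB : Bool) (S : Finset (Fin m)) : TopRow m := fun c =>
  if c ∈ rowSupport S then
    if hasB ∧ c = rowStart S then some B else some A
  else none

section encodeRow

variable {hasB : Bool} {S : Finset (Fin m)} {c : Fin (m + 1)}

lemma encodeRow_eq_none : encodeRow hasB S c = none ↔ c ∉ rowSupport S := by
  unfold encodeRow; split_ifs <;> simp_all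

lemma encodeRow_eq_B :
    encodeRow hasB S c = some B ↔ hasB ∧ c = rowStart S := by
  unfold encodeRow
  split_ifs with h h'
  · simpa using h'
  · simpa using h'
  · simp only [false_iff, not_and]
    rintro - rfl
    exact h (rowStart_mem S)

lemma encodeRow_eq_A : encodeRow hasB S c = some A ↔
    c ∈ rowSupport S ∧ ¬(hasB ∧ c = rowStart S) := by
  unfold encodeRow; split_ifs <;> simp_all

lemma encodeRow_mem_rowsOver {E : Finset (Fin m)} (hS : S ⊆ E) :
    encodeRow hasB S ∈ rowsOver E := by
  simp only [rowsOver, mem_filter, mem_univ, true_and]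
  refine ⟨fun c => ?_, by simp [encodeRow_eq_none, last_mem_rowSupport], fun c c' hc' hc => ?_,
    fun c hc => rowSupport_mono hS (not_not.mp (mt encodeRow_eq_none.mpr hc))⟩
  · unfold encodeRow; split_ifs <;> simp [IsAB]
  · rw [encodeRow_eq_none]
    intro hc'S
    obtain ⟨-, rfl⟩ := encodeRow_eq_B.mp hc
    exact (rowStart_le hc'S).not_gt hc'

lemma card_encodeRow_B : #{c | encodeRow hasB S c = some B} = if hasB then 1 else 0 := by
  cases hasB <;> simp [encodeRow_eq_B, filter_eq']

lemma card_encodeRow_A : #{c | encodeRow hasB S c = some A} = if hasB then #S else #S + 1 := by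
  cases hasB
  · simp [encodeRow_eq_A, card_rowSupport]
  · have : ({c | encodeRow true S c = some A} : Finset _) = (rowSupport S).erase (rowStart S) := by
      ext c; simp [encodeRow_eq_A, and_comm]
    rw [this, card_erase_of_mem (rowStart_mem S), card_rowSupport]
    rfl

lemma card_encodeRow_ne_A {E : Finset (Fin m)} (hS : S ⊆ E) :
    #{c ∈ rowSupport E | encodeRow hasB S c ≠ some A} = #E - #S + if hasB then 1 else 0 := by
  have hsub := rowSupport_mono hS
  have hdiff : #(rowSupport E \ rowSupport S) = #E - #S := by
    rw [card_sdiff_of_subset hsub, card_rowSupport, card_rowSupport, Nat.add_sub_add_right]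
  cases hasB
  · have : {c ∈ rowSupport E | encodeRow false S c ≠ some A} =
        rowSupport E \ rowSupport S := by
      ext c; simp [encodeRow_eq_A]
    simp [this, hdiff]
  · have : {c ∈ rowSupport E | encodeRow true S c ≠ some A} =
        insert (rowStart S) (rowSupport E \ rowSupport S) := by
      ext c
      rcases eq_or_ne c (rowStart S) with rfl | hc
      · simp [hsub (rowStart_mem S), encodeRow_eq_A]
      · simp [encodeRow_eq_A, hc]
    rw [this, card_insert_of_notMem (by simp [rowStart_mem]), hdiff]
    rfl

end encodeRow

def rowLetters (r : TopRow m) : Finset (Fin m) := {j | r j.castSucc ≠ none}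

section rowLetters

variable {r : TopRow m} {E : Finset (Fin m)}

lemma mem_rowSupport_rowLetters (hr : r (Fin.last m) ≠ none) {c : Fin (m + 1)} :
    c ∈ rowSupport (rowLetters r) ↔ r c ≠ none := by
  rcases Fin.eq_castSucc_or_eq_last c with ⟨j, rfl⟩ | rfl
  · simp [castSucc_mem_rowSupport, rowLetters]
  · simp [last_mem_rowSupport, hr]

lemma rowLetters_subset (hr : r ∈ rowsOver E) : rowLetters r ⊆ E := fun j hj => by
  simp only [rowsOver, rowLetters, mem_filter, mem_univ, true_and] at hr hj
  exact castSucc_mem_rowSupport.mp (hr.2.2.2 _ hj)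

lemma rowStart_rowLetters (hr : r ∈ rowsOver E) {c : Fin (m + 1)} (hc : r c = some B) :
    rowStart (rowLetters r) = c := by
  simp only [rowsOver, mem_filter, mem_univ, true_and] at hr
  have hsupp := fun c => mem_rowSupport_rowLetters (c := c) hr.2.1
  refine le_antisymm (rowStart_le ((hsupp c).mpr (by simp [hc]))) (not_lt.mp fun hlt => ?_)
  exact (hsupp _).mp (rowStart_mem _) (hr.2.2.1 c _ hlt hc)

lemma encodeRow_rowLetters (hr : r ∈ rowsOver E) :
    encodeRow (decide (∃ c, r c = some B)) (rowLetters r) = r := by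
  have hr' := hr
  simp only [rowsOver, mem_filter, mem_univ, true_and] at hr'
  obtain ⟨hAB, hlast, -, -⟩ := hr'
  funext c
  rcases h : r c with _ | x
  · exact encodeRow_eq_none.mpr (by simp [mem_rowSupport_rowLetters hlast, h])
  cases x
  case A =>
    refine encodeRow_eq_A.mpr ⟨(mem_rowSupport_rowLetters hlast).mpr (by simp [h]), ?_⟩
    rintro ⟨hex, rfl⟩
    obtain ⟨c', hc'⟩ := of_decide_eq_true hex
    rw [rowStart_rowLetters hr hc', hc'] at h
    cases h
  case B =>
    exact encodeRow_eq_B.mpr ⟨decide_eq_true ⟨c, h⟩, (rowStart_rowLetters hr h).symm⟩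
  case G => exact absurd h (hAB c).1
  case D => exact absurd h (hAB c).2

end rowLetters

lemma rowLetters_encodeRow (hasB : Bool) (S : Finset (Fin m)) :
    rowLetters (encodeRow hasB S) = S := by
  ext j; simp [rowLetters, encodeRow_eq_none, castSucc_mem_rowSupport]

lemma decide_exists_encodeRow_eq_B (hasB : Bool) (S : Finset (Fin m)) :
    decide (∃ c, encodeRow hasB S c = some B) = hasB := by
  cases hasB <;> simp [encodeRow_eq_B]

/-- An admissible row is determined by its letters off the diagonal and by whether its
leftmost letter is a `β`. -/
lemma sum_rowsOver {M : Type*} [AddCommMonoid M] (E : Finset (Fin m))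
    (f : TopRow m → M) :
    ∑ r ∈ rowsOver E, f r = ∑ p ∈ univ ×ˢ E.powerset, f (encodeRow p.1 p.2) := by
  refine sum_nbij' (fun r => (decide (∃ c, r c = some B), rowLetters r))
    (fun p => encodeRow p.1 p.2) (fun r hr => ?_) (fun p hp => ?_) (fun r hr => ?_)
    (fun p _ => ?_) (fun r hr => ?_)
  · exact mem_product.mpr ⟨mem_univ _, mem_powerset.mpr (rowLetters_subset hr)⟩
  · exact encodeRow_mem_rowsOver (mem_powerset.mp (mem_product.mp hp).2)
  · exact encodeRow_rowLetters hr
  · simp [rowLetters_encodeRow, decide_exists_encodeRow_eq_B]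
  · rw [encodeRow_rowLetters hr]

section weights

variable {R : Type*} [CommSemiring R] (a b x : R)

def rowWeight (E : Finset (Fin m)) (r : TopRow m) : R :=
  a ^ #{c | r c = some A} * b ^ #{c | r c = some B} * x ^ #{c ∈ rowSupport E | r c ≠ some A}

lemma rowWeight_encodeRow {E S : Finset (Fin m)} (hasB : Bool) (hS : S ⊆ E) :
    rowWeight a b x E (encodeRow hasB S) =
      (if hasB then b * x else a) * (a ^ #S * x ^ (#E - #S)) := by
  rw [rowWeight, card_encodeRow_A, card_encodeRow_B, card_encodeRow_ne_A hS]
  cases hasB <;> simp only [Bool.false_eq_true, if_false, if_true, pow_zero, pow_one, add_zero,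
    mul_one] <;> ring

theorem sum_rowWeight (E : Finset (Fin m)) :
    ∑ r ∈ rowsOver E, rowWeight a b x E r = (a + b * x) * (a + x) ^ #E := by
  calc ∑ r ∈ rowsOver E, rowWeight a b x E r
      = ∑ p ∈ univ ×ˢ E.powerset, rowWeight a b x E (encodeRow p.1 p.2) := sum_rowsOver E _
    _ = ∑ hasB : Bool, ∑ S ∈ E.powerset,
          (if hasB then b * x else a) * (a ^ #S * x ^ (#E - #S)) := by
        rw [sum_product]
        exact sum_congr rfl fun hasB _ => sum_congr rfl fun S hS =>
          rowWeight_encodeRow a b x hasB (mem_powerset.mp hS)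
    _ = (a + b * x) * (a + x) ^ #E := by
        simp [← mul_sum, sum_pow_mul_eq_add_pow, add_mul, add_comm]

def abWeight (T : Filling m) : R :=
  a ^ countLetter m T A * b ^ countLetter m T B * x ^ #(freeCols T)

lemma abWeight_consRow (r : TopRow m) (T : Filling m) :
    abWeight a b x (consRow r T) =
      a ^ countLetter m T A * b ^ countLetter m T B * rowWeight a b x (freeCols T) r := by
  rw [abWeight, rowWeight, countLetter_consRow, countLetter_consRow, freeCols_consRow]
  ring

end weights

theorem sum_abWeight {R : Type*} [CommSemiring R] (a b : R) (n : ℕ) (x : R) :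
    ∑ T ∈ abTableaux n, abWeight a b x T = ∏ j ∈ range n, (a + b * (x + j * a)) := by
  induction n generalizing x with
  | zero => simp [abTableaux, abWeight, countLetter, freeCols, IsStaircase]
  | succ n ih =>
    calc ∑ T ∈ abTableaux (n + 1), abWeight a b x T
        = ∑ T ∈ abTableaux n, a ^ countLetter n T A * b ^ countLetter n T B *
            ∑ r ∈ rowsOver (freeCols T), rowWeight a b x (freeCols T) r := by
          simp only [sum_abTableaux_succ, abWeight_consRow, mul_sum]
      _ = (a + b * x) * ∑ T ∈ abTableaux n, abWeight a b (a + x) T := by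
          simp only [sum_rowWeight, abWeight, mul_sum]
          exact sum_congr rfl fun _ _ => by ring
      _ = ∏ j ∈ range (n + 1), (a + b * (x + j * a)) := by
          rw [ih, prod_range_succ']
          simp only [Nat.cast_add, Nat.cast_one, Nat.cast_zero, zero_mul, add_zero]
          rw [mul_comm]
          congr 1
          exact prod_congr rfl fun j _ => by ring

lemma countLetter_eq_zero_iff {T : Filling m} {x : SLetter} :
    countLetter m T x = 0 ↔ ∀ i j, T i j ≠ some x := by
  simp [countLetter, filter_eq_empty_iff]

lemma stWt_zero_zero_one {R : Type*} [CommSemiring R] (a b : R) (T : Filling m) :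
    stWt m a b 0 0 1 T = if ∀ i j, IsAB (T i j) then abWeight a b 1 T else 0 := by
  have hAB : (∀ i j, IsAB (T i j)) ↔ countLetter m T G = 0 ∧ countLetter m T D = 0 := by
    simp only [IsAB, countLetter_eq_zero_iff, ← forall_and]
  simp only [stWt, abWeight, zero_pow_eq, one_pow, mul_one, hAB]
  split_ifs <;> simp_all

theorem stZ_one_zero_zero_one (R : Type*) [CommSemiring R] (n : ℕ) (a b : R) :
    stZ R n 1 a b 0 0 1 = ∏ j ∈ range n, (a + b + j * (a * b)) := by
  calc stZ R n 1 a b 0 0 1 = ∑ T ∈ {T | IsStaircase n T}, stWt n a b 0 0 1 T := by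
        simp only [stZ, one_pow, mul_one]
        exact (sum_subtype _ (by simp) _).symm
    _ = ∑ T ∈ abTableaux n, abWeight a b 1 T := by
        simp only [abTableaux, ← filter_filter, stWt_zero_zero_one, sum_filter]
    _ = ∏ j ∈ range n, (a + b + j * (a * b)) := by
        rw [sum_abWeight]
        exact prod_congr rfl fun j _ => by ring

end Staircase

open MvPolynomial in
theorem staircase_partition_alpha_beta_q_one_general (n : ℕ) :
    stZ (MvPolynomial (Fin 2) ℤ) n 1 (X 0) (X 1) 0 0 1 =
      ∏ j ∈ Finset.range n,
        (X 0 + X 1 + (j : MvPolynomial (Fin 2) ℤ) * (X 0 * X 1)) :=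
  Staircase.stZ_one_zero_zero_one _ n _ _

open MvPolynomial in
/-- For every positive integer `n`, the generating polynomial of staircase tableaux of size
`n` with only `α`'s and `β`'s, at `q = 1`, factors as
`Z_n(1; α, β, 0, 0; 1) = ∏_{j=0}^{n-1} (α + β + j·αβ)` in `ℤ[α, β]`. -/
theorem staircase_partition_alpha_beta_q_one (n : ℕ) (hn : 1 ≤ n) :
    stZ (MvPolynomial (Fin 2) ℤ) n 1 (X 0) (X 1) 0 0 1 =
      ∏ j ∈ Finset.range n,
        (X 0 + X 1 + (j : MvPolynomial (Fin 2) ℤ) * (X 0 * X 1)) :=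
  staircase_partition_alpha_beta_q_one_general n
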